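/- arXiv:2102.09040 — 3 statements merged into one kernel-verified Lean document; each statement's English description precedes it below -/
import Mathlib

section
/- Let D : [a,b] × ℝ^d → ℝ be such that t ↦ D_t(x) is non-increasing for each x, and x ↦ D_t(x) is 1-Lipschitz for each t. Then there exists an at most countable set S ⊆ [a,b] such that for every x ∈ ℝ^d, the function t ↦ D_t(x) is continuous at every t ∈ [a,b] \ S. -/
/-- If `D : [a,b] × ℝ^d → ℝ` is non-increasing in time and 1-Lipschitz in space, then
there is an at most countable set `S ⊆ [a,b]` outside of which `t ↦ D_t(x)` is continuous
for every `x` simultaneously. -/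
theorem countable_discontinuity_times (d : ℕ) (a b : ℝ) (hab : a ≤ b)
    (D : ℝ → EuclideanSpace ℝ (Fin d) → ℝ)
    (hmono : ∀ x : EuclideanSpace ℝ (Fin d), ∀ s ∈ Set.Icc a b, ∀ t ∈ Set.Icc a b,
      s ≤ t → D t x ≤ D s x)
    (hlip : ∀ t ∈ Set.Icc a b, LipschitzWith 1 (D t)) :
    ∃ S : Set ℝ, S.Countable ∧ S ⊆ Set.Icc a b ∧
      ∀ x : EuclideanSpace ℝ (Fin d), ∀ t ∈ Set.Icc a b \ S,
        ContinuousWithinAt (fun s => D s x) (Set.Icc a b) t := by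
  obtain ⟨Q, hQc, hQd⟩ := TopologicalSpace.exists_countable_dense (EuclideanSpace ℝ (Fin d))
  set f : EuclideanSpace ℝ (Fin d) → ℝ → ℝ :=
    fun q t => D (Set.projIcc a b hab t) q with hf
  have hanti : ∀ q, Antitone (f q) := by
    intro q s t hst
    exact hmono q _ (Set.projIcc a b hab s).2 _ (Set.projIcc a b hab t).2
      (Set.monotone_projIcc hab hst)
  set S : Set ℝ := (⋃ q ∈ Q, {t | ¬ContinuousAt (f q) t}) ∩ Set.Icc a b with hS
  refine ⟨S, ?_, Set.inter_subset_right, ?_⟩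
  · exact ((Set.Countable.biUnion hQc fun q _ => (hanti q).countable_not_continuousAt)).mono
      Set.inter_subset_left
  intro x t ht
  obtain ⟨htI, htS⟩ := ht
  have hcont : ∀ q ∈ Q, ContinuousAt (f q) t := by
    intro q hq
    by_contra h
    exact htS ⟨Set.mem_biUnion hq h, htI⟩
  rw [Metric.continuousWithinAt_iff]
  intro ε hε
  obtain ⟨q, hqQ, hqx⟩ : ∃ q ∈ Q, dist x q < ε / 4 := by
    have := hQd.exists_dist_lt x (by positivity : (0:ℝ) < ε / 4)
    obtain ⟨q, hq, hd⟩ := this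
    exact ⟨q, hq, hd⟩
  have := Metric.continuousAt_iff.1 (hcont q hqQ) (ε / 4) (by positivity)
  obtain ⟨δ, hδ, hδ'⟩ := this
  refine ⟨δ, hδ, fun {s} hs hds => ?_⟩
  have hfs : f q s = D s q := by rw [hf]; simp [Set.projIcc_of_mem hab hs]
  have hft : f q t = D t q := by rw [hf]; simp [Set.projIcc_of_mem hab htI]
  have h1 : dist (D s x) (D s q) ≤ ε / 4 := by
    have := (hlip s hs).dist_le_mul x q
    rw [NNReal.coe_one, one_mul] at this
    exact this.trans hqx.le
  have h2 : dist (D t q) (D t x) ≤ ε / 4 := by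
    have := (hlip t htI).dist_le_mul q x
    rw [dist_comm q x, NNReal.coe_one, one_mul] at this
    exact this.trans hqx.le
  have h3 : dist (D s q) (D t q) < ε / 4 := by
    have := hδ' hds
    rwa [hfs, hft] at this
  calc dist (D s x) (D t x)
      ≤ dist (D s x) (D s q) + dist (D s q) (D t q) + dist (D t q) (D t x) :=
        dist_triangle4 _ _ _ _
    _ < ε / 4 + ε / 4 + ε / 4 := by
        apply add_lt_add_of_lt_of_le (add_lt_add_of_le_of_lt h1 h3) h2
    _ < ε := by linarith
end

section
/- If an arc of a continuous curve is contained in a cone of angle α ∈ (0, 2π) with vertex z (and avoids z), then its winding number with respect to z satisfies Wnd(z,γ;t₁,t₂) ∈ [−α, α]. -/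
/-!
Along the arc, every value of a continuous argument lift lies in one of the sheets
`[θ₀ + 2πk, θ₀ + α + 2πk]` of the lifted cone. Since `α < 2π`, consecutive sheets are separated
by a gap, so the connected image of the lift stays in a single sheet, whose length is `α`.
-/

/-- `θ` is a continuous lift of the argument of `γ(·) − z` over `[s,t]`. -/
def IsArgLift (z : ℂ) (γ : ℝ → ℂ) (s t : ℝ) (θ : ℝ → ℝ) : Prop :=
  ContinuousOn θ (Set.Icc s t) ∧
    ∀ u ∈ Set.Icc s t,
      γ u - z = ((‖γ u - z‖ : ℝ) : ℂ) * Complex.exp ((θ u : ℂ) * Complex.I)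

open Set Real

def coneSheet (θ₀ α : ℝ) (k : ℤ) : Set ℝ :=
  Icc (θ₀ + 2 * π * k) (θ₀ + α + 2 * π * k)

lemma add_two_pi_mul_mem_coneSheet {θ₀ α φ : ℝ} (hφ : φ ∈ Icc θ₀ (θ₀ + α)) (k : ℤ) :
    φ + 2 * π * k ∈ coneSheet θ₀ α k :=
  ⟨by linarith [hφ.1], by linarith [hφ.2]⟩

lemma midGap_notMem_coneSheet {θ₀ α : ℝ} (hα : α < 2 * π) (k m : ℤ) :
    θ₀ + α / 2 + π + 2 * π * k ∉ coneSheet θ₀ α m := by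
  rintro ⟨hlow, hhigh⟩
  rcases le_or_gt m k with hmk | hkm
  · have : 2 * π * m ≤ 2 * π * k := by gcongr
    linarith
  · have : 2 * π * (k + 1) ≤ 2 * π * m := by gcongr; exact_mod_cast hkm
    linarith

section Preconnected

variable {S : Set ℝ} {θ₀ α a b : ℝ} {k k' : ℤ}

lemma IsPreconnected.coneSheet_index_le (hS : IsPreconnected S) (hα : α < 2 * π)
    (hcover : S ⊆ ⋃ m, coneSheet θ₀ α m) (ha : a ∈ S) (hb : b ∈ S)
    (hak : a ∈ coneSheet θ₀ α k) (hbk : b ∈ coneSheet θ₀ α k') : k' ≤ k := by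
  by_contra! hkk'
  have hsucc : 2 * π * (k + 1) ≤ 2 * π * k' := by gcongr; exact_mod_cast hkk'
  have hgap : θ₀ + α / 2 + π + 2 * π * k ∈ S :=
    hS.Icc_subset ha hb ⟨by linarith [hak.2], by linarith [hbk.1]⟩
  obtain ⟨m, hm⟩ := mem_iUnion.1 (hcover hgap)
  exact midGap_notMem_coneSheet hα k m hm

lemma IsPreconnected.sub_mem_Icc_of_subset_iUnion_coneSheet (hS : IsPreconnected S)
    (hα : α < 2 * π) (hcover : S ⊆ ⋃ m, coneSheet θ₀ α m) (ha : a ∈ S) (hb : b ∈ S) :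
    b - a ∈ Icc (-α) α := by
  obtain ⟨k, hak⟩ := mem_iUnion.1 (hcover ha)
  obtain ⟨k', hbk⟩ := mem_iUnion.1 (hcover hb)
  obtain rfl : k' = k :=
    le_antisymm (hS.coneSheet_index_le hα hcover ha hb hak hbk)
      (hS.coneSheet_index_le hα hcover hb ha hbk hak)
  exact ⟨by linarith [hak.2, hbk.1], by linarith [hak.1, hbk.2]⟩

end Preconnected

lemma exists_int_eq_add_two_pi_mul_of_polar {w : ℂ} {θ φ r : ℝ}
    (hθ : w = ((‖w‖ : ℝ) : ℂ) * Complex.exp ((θ : ℂ) * Complex.I)) (hr : 0 < r)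
    (hφ : w = (r : ℂ) * Complex.exp ((φ : ℂ) * Complex.I)) :
    ∃ n : ℤ, θ = φ + 2 * π * n := by
  have hnorm : ‖w‖ = r := by
    rw [hφ, norm_mul, Complex.norm_exp_ofReal_mul_I, Complex.norm_real, Real.norm_of_nonneg hr.le,
      mul_one]
  rw [hnorm, hφ] at hθ
  obtain ⟨n, hn⟩ := Complex.exp_eq_exp_iff_exists_int.1
    (mul_left_cancel₀ (Complex.ofReal_ne_zero.2 hr.ne') hθ).symm
  refine ⟨n, ?_⟩
  have hI : (θ : ℂ) * Complex.I = ((φ + 2 * π * n : ℝ) : ℂ) * Complex.I := by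
    rw [hn]; push_cast; ring
  exact_mod_cast mul_right_cancel₀ Complex.I_ne_zero hI

theorem winding_in_cone_general (t₁ t₂ : ℝ) (ht : t₁ ≤ t₂) (γ : ℝ → ℂ) (z : ℂ)
    (α θ₀ : ℝ) (hα : α < 2 * Real.pi)
    (hcone : ∀ t ∈ Set.Icc t₁ t₂, ∃ r > (0 : ℝ), ∃ φ ∈ Set.Icc θ₀ (θ₀ + α),
      γ t = z + (r : ℂ) * Complex.exp ((φ : ℂ) * Complex.I)) :
    ∀ θ : ℝ → ℝ, IsArgLift z γ t₁ t₂ θ → θ t₂ - θ t₁ ∈ Set.Icc (-α) α := by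
  rintro θ ⟨hθc, hθ⟩
  refine (isPreconnected_Icc.image θ hθc).sub_mem_Icc_of_subset_iUnion_coneSheet (θ₀ := θ₀) hα ?_
    (mem_image_of_mem θ ⟨le_rfl, ht⟩) (mem_image_of_mem θ ⟨ht, le_rfl⟩)
  rintro _ ⟨u, hu, rfl⟩
  obtain ⟨r, hr, φ, hφ, hγu⟩ := hcone u hu
  obtain ⟨n, hn⟩ := exists_int_eq_add_two_pi_mul_of_polar (hθ u hu) hr (by rw [hγu]; ring)
  exact mem_iUnion.2 ⟨n, hn ▸ add_two_pi_mul_mem_coneSheet hφ n⟩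

/-- If an arc of a continuous curve is contained in a cone of angle `α ∈ (0,2π)` with
vertex `z` (and avoids `z`), then its winding number with respect to `z` lies in `[−α,α]`. -/
theorem winding_in_cone (t₁ t₂ : ℝ) (ht : t₁ ≤ t₂) (γ : ℝ → ℂ) (z : ℂ)
    (hγ : ContinuousOn γ (Set.Icc t₁ t₂))
    (α θ₀ : ℝ) (hα₀ : 0 < α) (hα : α < 2 * Real.pi)
    (hcone : ∀ t ∈ Set.Icc t₁ t₂, ∃ r > (0 : ℝ), ∃ φ ∈ Set.Icc θ₀ (θ₀ + α),
      γ t = z + (r : ℂ) * Complex.exp ((φ : ℂ) * Complex.I)) :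
    ∀ θ : ℝ → ℝ, IsArgLift z γ t₁ t₂ θ → θ t₂ - θ t₁ ∈ Set.Icc (-α) α :=
  winding_in_cone_general t₁ t₂ ht γ z α θ₀ hα hcone
end

section
/- Let (Γ_t)_{t∈[0,T]} be a non-decreasing right-continuous family of closed subsets of ℝ^d with distance functions D_t(x) := dist(x, Γ_t), and let b : [0,T+1] → ℝ^d be continuous with β(b) := inf{t ∈ [0,T+1] : D_t(b(t)) = 0} ≤ T. Then for every δ > 0 there exists ε' > 0 such that for all continuous b' : [0,T+1] → ℝ^d with sup |b' − b| < ε', one has inf{t ∈ [0,T+1] : D_t(b'(t)) = 0} ≥ β(b) − δ. (The hitting time of the growing closed set is lower semicontinuous in the path.) -/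
/-- Lower semicontinuity of the hitting time of a growing family of closed sets in the
path: if a continuous path `b` hits the aggregate no later than `T`, then for every
`δ > 0` all uniformly sufficiently close continuous paths cannot hit the aggregate before
`β(b) − δ`. -/
theorem hitting_time_lower_semicontinuous (d : ℕ) (T : ℝ) (hT : 0 < T)
    (Γ : ℝ → Set (EuclideanSpace ℝ (Fin d)))
    (hne : ∀ t, (Γ t).Nonempty) (hcl : ∀ t, IsClosed (Γ t))
    (hmono : ∀ s t : ℝ, s ≤ t → Γ s ⊆ Γ t)
    (hrc : ∀ t ∈ Set.Ico 0 (T + 1), Γ t = ⋂ s ∈ Set.Ioc t (T + 1), Γ s)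
    (b : ℝ → EuclideanSpace ℝ (Fin d)) (hb : ContinuousOn b (Set.Icc 0 (T + 1)))
    (hhit : ∃ t ∈ Set.Icc 0 (T + 1), Metric.infDist (b t) (Γ t) = 0)
    (hβ : sInf {t | t ∈ Set.Icc 0 (T + 1) ∧ Metric.infDist (b t) (Γ t) = 0} ≤ T) :
    ∀ δ > (0 : ℝ), ∃ ε' > (0 : ℝ), ∀ b' : ℝ → EuclideanSpace ℝ (Fin d),
      ContinuousOn b' (Set.Icc 0 (T + 1)) →
      (∀ t ∈ Set.Icc 0 (T + 1), dist (b' t) (b t) < ε') →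
      ∀ t ∈ Set.Icc 0 (T + 1), Metric.infDist (b' t) (Γ t) = 0 →
        sInf {s | s ∈ Set.Icc 0 (T + 1) ∧ Metric.infDist (b s) (Γ s) = 0} - δ ≤ t := by
  intro δ hδ
  set S : Set ℝ := {t | t ∈ Set.Icc 0 (T + 1) ∧ Metric.infDist (b t) (Γ t) = 0} with hSdef
  set β : ℝ := sInf S with hβdef
  have hbdd : BddBelow S := ⟨0, fun x hx => hx.1.1⟩
  by_cases hcase : β - δ ≤ 0
  · exact ⟨1, one_pos, fun b' _ _ t ht _ => le_trans hcase ht.1⟩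
  push_neg at hcase
  -- key: uniform positive lower bound on [0, β - δ]
  have key : ∃ ε > 0, ∀ s ∈ Set.Icc 0 (β - δ), ε ≤ Metric.infDist (b s) (Γ s) := by
    by_contra hcon
    push_neg at hcon
    choose s hs hval using fun n : ℕ => hcon (1 / (n + 1)) (by positivity)
    obtain ⟨a, ha, φ, hφ, hlim⟩ := (isCompact_Icc).tendsto_subseq hs
    have haT : a ∈ Set.Icc 0 (T + 1) := ⟨ha.1, by linarith [ha.2, hβ]⟩
    have hmemIcc : ∀ n : ℕ, s (φ n) ∈ Set.Icc (0 : ℝ) (T + 1) :=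
      fun n => ⟨(hs (φ n)).1, by linarith [(hs (φ n)).2, hβ]⟩
    have hba : Filter.Tendsto (fun n => b (s (φ n))) Filter.atTop (nhds (b a)) := by
      have h1 : Filter.Tendsto (fun n => s (φ n)) Filter.atTop
          (nhdsWithin a (Set.Icc 0 (T + 1))) :=
        tendsto_nhdsWithin_of_tendsto_nhds_of_eventually_within _ hlim
          (Filter.Eventually.of_forall hmemIcc)
      exact ((hb a haT).tendsto).comp h1
    have hdist0 : Filter.Tendsto (fun n => dist (b a) (b (s (φ n))))
        Filter.atTop (nhds 0) := by
      have := Filter.Tendsto.dist (tendsto_const_nhds (x := b a)) hba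
      simpa using this
    have hinv0 : Filter.Tendsto (fun n : ℕ => 1 / ((φ n : ℝ) + 1))
        Filter.atTop (nhds 0) := by
      have hφtop : Filter.Tendsto φ Filter.atTop Filter.atTop := hφ.tendsto_atTop
      have : Filter.Tendsto (fun n : ℕ => 1 / ((n : ℝ) + 1)) Filter.atTop (nhds 0) :=
        tendsto_one_div_add_atTop_nhds_zero_nat
      exact this.comp hφtop
    have hmem : ∀ u ∈ Set.Ioc a (T + 1), b a ∈ Γ u := by
      intro u hu
      have hzero : Metric.infDist (b a) (Γ u) = 0 := by
        have hle : ∀ᶠ n in Filter.atTop, Metric.infDist (b a) (Γ u) ≤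
            1 / ((φ n : ℝ) + 1) + dist (b a) (b (s (φ n))) := by
          have hev : ∀ᶠ n in Filter.atTop, s (φ n) < u :=
            hlim.eventually_lt_const hu.1
          filter_upwards [hev] with n hn
          have h1 : Metric.infDist (b a) (Γ u) ≤
              Metric.infDist (b (s (φ n))) (Γ u) + dist (b a) (b (s (φ n))) :=
            Metric.infDist_le_infDist_add_dist
          have h2 : Metric.infDist (b (s (φ n))) (Γ u) ≤
              Metric.infDist (b (s (φ n))) (Γ (s (φ n))) :=
            Metric.infDist_le_infDist_of_subset (hmono _ _ hn.le) (hne _)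
          have h3 : Metric.infDist (b (s (φ n))) (Γ (s (φ n))) ≤ 1 / ((φ n : ℝ) + 1) :=
            (hval (φ n)).le
          linarith
        have htend : Filter.Tendsto
            (fun n => 1 / ((φ n : ℝ) + 1) + dist (b a) (b (s (φ n))))
            Filter.atTop (nhds 0) := by
          simpa using hinv0.add hdist0
        have := ge_of_tendsto htend hle
        exact le_antisymm this (Metric.infDist_nonneg)
      exact ((hcl u).mem_iff_infDist_zero (hne u)).mpr hzero
    have haΓ : b a ∈ Γ a := by
      rw [hrc a ⟨ha.1, by linarith [ha.2, hβ]⟩]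
      exact Set.mem_iInter₂.2 hmem
    have haS : a ∈ S := ⟨haT, Metric.infDist_zero_of_mem haΓ⟩
    have : β ≤ a := csInf_le hbdd haS
    linarith [ha.2]
  obtain ⟨ε, hε, hlow⟩ := key
  refine ⟨ε, hε, fun b' _ hclose t ht hhit' => ?_⟩
  by_contra hcontra
  push_neg at hcontra
  have htmem : t ∈ Set.Icc 0 (β - δ) := ⟨ht.1, hcontra.le⟩
  have h1 : ε ≤ Metric.infDist (b t) (Γ t) := hlow t htmem
  have h2 : Metric.infDist (b t) (Γ t) ≤
      Metric.infDist (b' t) (Γ t) + dist (b t) (b' t) :=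
    Metric.infDist_le_infDist_add_dist
  have h3 : dist (b t) (b' t) < ε := by
    rw [dist_comm]; exact hclose t ht
  rw [hhit'] at h2
  linarith
end
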